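/- For the binary alphabet A = {0,1} and any n ≥ 2, there is no linear universal partial word for A^n containing a single ◊ located at position n from the beginning (and hence, by symmetry under reversal, none with the ◊ at position n from the end). -/

import Mathlib

/-!
Let the only hole sit at index `d = n - 1` and let `β` be the length-`d` factor right after it.
Both words `x :: β` occur only at the hole, so an occurrence of `β ++ [c]` away from `0` must be
at `d + 1`; taking `c` different from the letter at index `2d + 1` shows that `β` is also a
prefix. Then `β ++ [u[2d+1]]` occurs at `0` (through the hole) and at `d + 1`. The counting
bound `2^n ≤ 2 (|u| - n + 1)` makes `u` long enough for this, except when `n = 2` and `|u| = 3`,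
which is checked directly. Reversing `u` gives the statement about the end.
-/

/-- A partial-word symbol over the alphabet `Fin α`: `none` is the wildcard `◊`. -/
abbrev PSym (α : ℕ) := Option (Fin α)

/-- The word `v ∈ A^*` appears as a factor of the partial word `u` at 0-based position `i`:
each symbol of `u` in the window is either `◊` or equals the corresponding letter of `v`. -/
def MatchAt {α : ℕ} (u : List (PSym α)) (v : List (Fin α)) (i : ℕ) : Prop :=
  i + v.length ≤ u.length ∧
    ∀ j < v.length, u[i + j]? = some none ∨ u[i + j]? = (v[j]?).map some

/-- `u` is a linear universal partial word (upword) for `A^n`, `A = Fin α`: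
every word of length `n` over `A` appears exactly once as a factor. -/
def IsLinearUpword (α n : ℕ) (u : List (PSym α)) : Prop :=
  ∀ v : List (Fin α), v.length = n → ∃! i : ℕ, MatchAt u v i

/-- `v` appears as a cyclic factor of the partial word `u` at position `i`
(indices taken modulo `u.length`). -/
def CycMatchAt {α : ℕ} (u : List (PSym α)) (v : List (Fin α)) (i : ℕ) : Prop :=
  ∀ j < v.length,
    u[(i + j) % u.length]? = some none ∨ u[(i + j) % u.length]? = (v[j]?).map some

/-- `u` is a cyclic universal partial word for `A^n`: every word of length `n` over `A`
appears exactly once as a cyclic factor. -/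
def IsCyclicUpword (α n : ℕ) (u : List (PSym α)) : Prop :=
  ∀ v : List (Fin α), v.length = n → ∃! i : ℕ, i < u.length ∧ CycMatchAt u v i

theorem List.eq_of_count_eq_one {γ : Type*} [BEq γ] [LawfulBEq γ] {l : List γ} {a : γ}
    (hc : l.count a = 1) {i j : ℕ} (hi : l[i]? = some a) (hj : l[j]? = some a) : i = j := by
  classical
  by_contra hij
  have hdup : l.Duplicate a := by
    obtain ⟨hi', rfl⟩ := List.getElem?_eq_some_iff.mp hi
    obtain ⟨hj', hj⟩ := List.getElem?_eq_some_iff.mp hj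
    rw [List.duplicate_iff_exists_distinct_get]
    rcases Nat.lt_or_gt_of_ne hij with h | h
    · exact ⟨⟨i, hi'⟩, ⟨j, hj'⟩, h, rfl, hj.symm⟩
    · exact ⟨⟨j, hj'⟩, ⟨i, hi'⟩, h, hj.symm, rfl⟩
  have := List.duplicate_iff_two_le_count.mp hdup
  rw [lawful_beq_subsingleton instBEqOfDecidableEq ‹BEq γ›] at this
  omega

example (u : List (PSym 2)) (hc : u.count (none : PSym 2) = 1) (i j : ℕ) (hi : u[i]? = some none) (hj : u[j]? = some none) : i = j := List.eq_of_count_eq_one hc hi hj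

namespace MatchAt

variable {α : ℕ} {u : List (PSym α)}

theorem append_iff {v w : List (Fin α)} {i : ℕ} :
    MatchAt u (v ++ w) i ↔ MatchAt u v i ∧ MatchAt u w (i + v.length) := by
  simp only [MatchAt, List.length_append]
  constructor
  · rintro ⟨hlen, h⟩
    refine ⟨⟨by omega, fun j hj => ?_⟩, ⟨by omega, fun j hj => ?_⟩⟩
    · simpa [List.getElem?_append_left hj] using h j (by omega)
    · simpa [Nat.add_assoc, List.getElem?_append_right] using h (v.length + j) (by omega)
  · rintro ⟨⟨-, hv⟩, ⟨hlen, hw⟩⟩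
    refine ⟨by omega, fun j hj => ?_⟩
    rcases lt_or_ge j v.length with hj' | hj'
    · simpa [List.getElem?_append_left hj'] using hv j hj'
    · obtain ⟨k, rfl⟩ := Nat.exists_eq_add_of_le hj'
      simpa [Nat.add_assoc, List.getElem?_append_right] using hw k (by omega)

theorem singleton_iff {a : Fin α} {i : ℕ} :
    MatchAt u [a] i ↔ u[i]? = some none ∨ u[i]? = some (some a) := by
  simp only [MatchAt, List.length_singleton, Nat.lt_one_iff, forall_eq, Nat.add_zero]
  constructor
  · exact fun h => by simpa using h.2
  · intro h
    refine ⟨?_, by simpa using h⟩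
    rcases h with h | h <;> exact Nat.succ_le_of_lt (List.getElem?_eq_some_iff.mp h).1

theorem exists_singleton [NeZero α] {i : ℕ} (hi : i < u.length) : ∃ a : Fin α, MatchAt u [a] i := by
  rcases hσ : u[i] with _ | a
  · exact ⟨0, singleton_iff.2 (Or.inl (by simp [hi, hσ]))⟩
  · exact ⟨a, singleton_iff.2 (Or.inr (by simp [hi, hσ]))⟩

theorem exists_not_singleton [Nontrivial (Fin α)] {i : ℕ} (hi : u[i]? ≠ some none) :
    ∃ a : Fin α, ¬ MatchAt u [a] i := by
  rcases hσ : u[i]? with _ | _ | b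
  · exact ⟨Classical.ofNonempty, by simp [singleton_iff, hσ]⟩
  · exact absurd hσ hi
  · obtain ⟨a, hab⟩ := exists_ne b
    exact ⟨a, by simp [singleton_iff, hσ, Ne.symm hab]⟩

theorem exists_of_add_le [NeZero α] {i m : ℕ} (h : i + m ≤ u.length) :
    ∃ v : List (Fin α), v.length = m ∧ MatchAt u v i := by
  induction m with
  | zero => exact ⟨[], rfl, by simp [MatchAt]; omega⟩
  | succ m ih =>
    obtain ⟨v, hvlen, hv⟩ := ih (by omega)
    obtain ⟨a, ha⟩ := exists_singleton (u := u) (i := i + m) (by omega)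
    exact ⟨v ++ [a], by simp [hvlen], append_iff.2 ⟨hv, hvlen ▸ ha⟩⟩

theorem getElem?_eq {v w : List (Fin α)} {i t : ℕ} (hv : MatchAt u v i) (hw : MatchAt u w i)
    (ht : t < v.length) (htw : t < w.length) (hhole : u[i + t]? ≠ some none) : v[t]? = w[t]? := by
  have h1 := (hv.2 t ht).resolve_left hhole
  have h2 := (hw.2 t htw).resolve_left hhole
  exact Option.map_injective (Option.some_injective _) (h1.symm.trans h2)

theorem reverse {v : List (Fin α)} {i : ℕ} (h : MatchAt u v i) :
    MatchAt u.reverse v.reverse (u.length - v.length - i) := by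
  obtain ⟨hlen, hmatch⟩ := h
  refine ⟨by simp; omega, fun j hj => ?_⟩
  rw [List.length_reverse] at hj
  rw [List.getElem?_reverse (by omega), List.getElem?_reverse hj,
    show u.length - 1 - (u.length - v.length - i + j) = i + (v.length - 1 - j) by omega]
  exact hmatch (v.length - 1 - j) (by omega)

end MatchAt

namespace IsLinearUpword

variable {α n : ℕ} {u : List (PSym α)}

theorem le_length [NeZero α] (hu : IsLinearUpword α n u) : n ≤ u.length := by
  obtain ⟨i, hi, -⟩ := hu (List.replicate n 0) List.length_replicate
  have := hi.1
  rw [List.length_replicate] at this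
  omega

theorem reverse (hu : IsLinearUpword α n u) : IsLinearUpword α n u.reverse := by
  intro v hv
  obtain ⟨i, hi, hiu⟩ := hu v.reverse (by simpa using hv)
  have hile : i + n ≤ u.length := by simpa [hv] using hi.1
  refine ⟨u.length - n - i, by simpa [hv] using hi.reverse, fun j hj => ?_⟩
  have hjle : j + n ≤ u.length := by simpa [hv] using hj.1
  have := hiu _ (by simpa [hv] using hj.reverse)
  omega

/-- A window of length `n` covers at most one word unless it contains the hole `d`, in which
case the letter of the word at `d` is free as well. -/
theorem pow_le_mul [NeZero α] {d : ℕ} (hu : IsLinearUpword α n u)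
    (hhole : ∀ i, u[i]? = some none → i = d) : α ^ n ≤ α * (u.length - n + 1) := by
  choose F hF _ using fun v : Fin n → Fin α => hu (List.ofFn v) List.length_ofFn
  have hFle (v : Fin n → Fin α) : F v + n ≤ u.length := by simpa using (hF v).1
  let G : (Fin n → Fin α) → Fin (u.length - n + 1) × Fin α := fun v =>
    (⟨F v, by have := hFle v; omega⟩, if h : d - F v < n then v ⟨d - F v, h⟩ else 0)
  have hG : G.Injective := by
    intro v w hvw
    simp only [G, Prod.mk.injEq, Fin.mk.injEq] at hvw
    obtain ⟨hFvw, hd⟩ := hvw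
    funext ⟨t, ht⟩
    by_cases htd : F v + t = d
    · simpa [← hFvw, show d - F v = t by omega, ht] using hd
    · have := (hF v).getElem?_eq (hFvw ▸ hF w) (t := t) (by simpa) (by simpa)
        (fun h => htd (hhole _ h))
      simpa [ht] using this
  calc α ^ n = Fintype.card (Fin n → Fin α) := by simp
    _ ≤ Fintype.card (Fin (u.length - n + 1) × Fin α) := Fintype.card_le_of_injective G hG
    _ = α * (u.length - n + 1) := by simp [mul_comm]

end IsLinearUpword

namespace IsLinearUpword

variable {d : ℕ} {u : List (PSym 2)} {β : List (Fin 2)}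

theorem eq_of_matchAt_cons (hu : IsLinearUpword 2 (d + 1) u) (hd : u[d]? = some none)
    (hβ : MatchAt u β (d + 1)) (hβlen : β.length = d) {x : Fin 2} {i : ℕ} (h : MatchAt u (x :: β) i) : i = d :=
  (hu _ (by simp [hβlen])).unique h
    (MatchAt.append_iff (v := [x]).2 ⟨MatchAt.singleton_iff.2 (Or.inl hd), hβ⟩)

theorem eq_zero_or_eq_of_matchAt_append (hu : IsLinearUpword 2 (d + 1) u)
    (hd : u[d]? = some none) (hβ : MatchAt u β (d + 1)) (hβlen : β.length = d) {c : Fin 2} {j : ℕ} (h : MatchAt u (β ++ [c]) j) :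
    j = 0 ∨ j = d + 1 := by
  obtain _ | j := j
  · exact Or.inl rfl
  obtain ⟨hβj, -⟩ := MatchAt.append_iff.1 h
  obtain ⟨x, hx⟩ := MatchAt.exists_singleton (u := u) (i := j) (by have := hβj.1; omega)
  have := eq_of_matchAt_cons hu hd hβ hβlen (MatchAt.append_iff (v := [x]).2 ⟨hx, hβj⟩)
  omega

theorem matchAt_zero_of_matchAt_after_hole (hu : IsLinearUpword 2 (d + 1) u)
    (hd : u[d]? = some none) (hβ : MatchAt u β (d + 1)) (hβlen : β.length = d) (hhole : ∀ i, u[i]? = some none → i = d) :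
    MatchAt u β 0 := by
  obtain ⟨c, hc⟩ := MatchAt.exists_not_singleton (u := u) (i := 2 * d + 1)
    (fun h => by have := hhole _ h; omega)
  obtain ⟨j, hj, -⟩ := hu (β ++ [c]) (by simp [hβlen])
  rcases eq_zero_or_eq_of_matchAt_append hu hd hβ hβlen hj with rfl | rfl
  · exact (MatchAt.append_iff.1 hj).1
  · exact absurd (by simpa [hβlen, Nat.two_mul, Nat.add_right_comm] using
      (MatchAt.append_iff.1 hj).2) hc

theorem false_of_sole_hole_at (hd₁ : 1 ≤ d) (hu : IsLinearUpword 2 (d + 1) u)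
    (hd : u[d]? = some none) (hhole : ∀ i, u[i]? = some none → i = d) : False := by
  have hcount := hu.pow_le_mul hhole
  have hpow₁ : d < 2 ^ d := Nat.lt_two_pow_self
  have hpow₂ : d - 1 < 2 ^ (d - 1) := Nat.lt_two_pow_self
  have hpow : 2 ^ (d + 1) = 4 * 2 ^ (d - 1) := by
    rw [show d + 1 = d - 1 + 2 by omega, pow_add]; simp [mul_comm]
  obtain ⟨β, hβlen, hβ⟩ := MatchAt.exists_of_add_le (u := u) (i := d + 1) (m := d) (by omega)
  have hβ₀ := matchAt_zero_of_matchAt_after_hole hu hd hβ hβlen hhole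
  rcases lt_or_ge (2 * d + 1) u.length with hlong | hshort
  · obtain ⟨a, ha⟩ := MatchAt.exists_singleton hlong
    have h₀ : MatchAt u (β ++ [a]) 0 :=
      MatchAt.append_iff.2 ⟨hβ₀, by simpa [hβlen] using MatchAt.singleton_iff.2 (Or.inl hd)⟩
    have hₙ : MatchAt u (β ++ [a]) (d + 1) :=
      MatchAt.append_iff.2 ⟨hβ, by simpa [hβlen, Nat.two_mul, Nat.add_right_comm] using ha⟩
    have := (hu _ (by simp [hβlen])).unique h₀ hₙ
    omega
  · obtain rfl : d = 1 := by omega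
    obtain ⟨b, rfl⟩ := List.length_eq_one_iff.1 hβlen
    obtain ⟨a, ha⟩ := MatchAt.exists_singleton (u := u) (i := 0) (by omega)
    have h₀ : MatchAt u [a, b] 0 :=
      MatchAt.append_iff (v := [a]).2 ⟨ha, MatchAt.singleton_iff.2 (Or.inl hd)⟩
    exact absurd (eq_of_matchAt_cons hu hd hβ hβlen h₀) (by omega)

end IsLinearUpword

/-- Positions are 1-based: position `n` from the beginning is index `n - 1`, and position `n`
from the end is index `u.length - n`. -/
theorem no_upword_diamond_at_pos_n (n : ℕ) (hn : 2 ≤ n)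
    (u : List (PSym 2)) (hu : IsLinearUpword 2 n u)
    (hc : u.count (none : PSym 2) = 1) :
    u[n - 1]? ≠ some none ∧ u[u.length - n]? ≠ some none := by
  obtain ⟨d, rfl⟩ : ∃ d, n = d + 1 := ⟨n - 1, by omega⟩
  have hole_ne (w : List (PSym 2)) (hw : IsLinearUpword 2 (d + 1) w) (hwc : w.count none = 1) :
      w[d]? ≠ some none := fun hd =>
    hw.false_of_sole_hole_at (by omega) hd fun i hi => List.eq_of_count_eq_one hwc hi hd
  refine ⟨hole_ne u hu hc, fun hd => hole_ne u.reverse hu.reverse (by rwa [List.count_reverse]) ?_⟩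
  have := hu.le_length
  rwa [List.getElem?_reverse (by omega), show u.length - 1 - d = u.length - (d + 1) by omega]
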